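/- arXiv:2303.14094 — 2 statements merged into one kernel-verified Lean document; each statement's English description precedes it below -/
import Mathlib

section
/- Let X be the closed-loop chain X_0 = x, X_{k+1} = g(X_k, ξ_k). Suppose there exist b > 0, λ_min ∈ [0,1), a measurable V : ℝ^n → [0,∞), and a compact C ⊆ ℝ^n such that for every x ∉ C, E[V(g(x, ξ_0))] ≤ λ_min · V(x), sup_{x ∈ C} E[V(g(x, ξ_0))] = b, and ω ↦ V(g(x, ξ_0(ω))) is integrable for every x. Let λ ∈ [λ_min, 1), let r > 0, and set m(r) = inf_{y : ‖y‖ > r} V(y); assume m(r) > 0. Then for every k ∈ ℕ and every initial state x ∈ ℝ^n, P(‖X_k‖ > r) ≤ (λ^k · V(x) + b · (1 - λ)^{-1}) / m(r). -/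
open MeasureTheory ProbabilityTheory

/-- Auxiliary: the state at time `k` as a measurable function of the first `k` noises. -/
private def chainFun {n m : ℕ}
    (g : EuclideanSpace ℝ (Fin n) → EuclideanSpace ℝ (Fin m) → EuclideanSpace ℝ (Fin n))
    (x : EuclideanSpace ℝ (Fin n)) :
    (k : ℕ) → (Fin k → EuclideanSpace ℝ (Fin m)) → EuclideanSpace ℝ (Fin n)
  | 0, _ => x
  | (k + 1), v => g (chainFun g x k (Fin.init v)) (v (Fin.last k))

private lemma chainFun_measurable {n m : ℕ}
    {g : EuclideanSpace ℝ (Fin n) → EuclideanSpace ℝ (Fin m) → EuclideanSpace ℝ (Fin n)}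
    (hg : Measurable fun q : EuclideanSpace ℝ (Fin n) × EuclideanSpace ℝ (Fin m) => g q.1 q.2)
    (x : EuclideanSpace ℝ (Fin n)) : ∀ k, Measurable (chainFun g x k) := by
  intro k
  induction k with
  | zero => exact measurable_const
  | succ k ih =>
    have hinit : Measurable (fun v : Fin (k + 1) → EuclideanSpace ℝ (Fin m) => Fin.init v) :=
      measurable_pi_lambda _ fun i => measurable_pi_apply _
    exact hg.comp ((ih.comp hinit).prodMk (measurable_pi_apply _))

/-- Tail bound (Markov's inequality combined with Proposition 1): under the
geometric drift condition, with `m r = inf_{‖y‖ > r} V y > 0`, one has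
`P(‖X k‖ > r) ≤ (λ ^ k * V x + b * (1 - λ)⁻¹) / m r`. -/
theorem tail_bound_from_drift
    {n p m : ℕ} {Ω : Type} [MeasurableSpace Ω] (P : Measure Ω) [IsProbabilityMeasure P]
    (ξ : ℕ → Ω → EuclideanSpace ℝ (Fin m)) (hξmeas : ∀ k, Measurable (ξ k))
    (hindep : iIndepFun ξ P)
    (hident : ∀ k, P.map (ξ k) = P.map (ξ 0))
    (f : EuclideanSpace ℝ (Fin n) → EuclideanSpace ℝ (Fin p) → EuclideanSpace ℝ (Fin m) →
      EuclideanSpace ℝ (Fin n))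
    (hf : Measurable fun q : EuclideanSpace ℝ (Fin n) × EuclideanSpace ℝ (Fin p) ×
      EuclideanSpace ℝ (Fin m) => f q.1 q.2.1 q.2.2)
    (α : EuclideanSpace ℝ (Fin n) → EuclideanSpace ℝ (Fin p)) (hα : Measurable α)
    (g : EuclideanSpace ℝ (Fin n) → EuclideanSpace ℝ (Fin m) → EuclideanSpace ℝ (Fin n))
    (hg : ∀ x' ξ', g x' ξ' = f x' (α x') ξ')
    (V : EuclideanSpace ℝ (Fin n) → ℝ) (hV : Measurable V) (hVnonneg : ∀ y, 0 ≤ V y)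
    (b : ℝ) (hb : 0 < b) (lammin : ℝ) (hlammin : lammin ∈ Set.Ico (0 : ℝ) 1)
    (C : Set (EuclideanSpace ℝ (Fin n))) (hC : IsCompact C)
    (hint : ∀ x', Integrable (fun ω => V (g x' (ξ 0 ω))) P)
    (hdrift : ∀ x' ∉ C, ∫ ω, V (g x' (ξ 0 ω)) ∂P ≤ lammin * V x')
    (hsup : (⨆ x' ∈ C, ∫ ω, V (g x' (ξ 0 ω)) ∂P) = b)
    (x : EuclideanSpace ℝ (Fin n)) (X : ℕ → Ω → EuclideanSpace ℝ (Fin n))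
    (hX0 : ∀ ω, X 0 ω = x)
    (hXrec : ∀ k ω, X (k + 1) ω = g (X k ω) (ξ k ω))
    (lam : ℝ) (hlam : lam ∈ Set.Ico lammin 1)
    (r : ℝ) (hr : 0 < r)
    (mr : ℝ) (hmr : mr = sInf (V '' {y | r < ‖y‖})) (hmrpos : 0 < mr)
    (k : ℕ) :
    (P {ω | r < ‖X k ω‖}).toReal ≤ (lam ^ k * V x + b * (1 - lam)⁻¹) / mr := by
  have hlam0 : (0 : ℝ) ≤ lam := le_trans hlammin.1 hlam.1
  have hlam1 : lam < 1 := hlam.2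
  -- measurability of g, V ∘ g
  have hGm : Measurable (fun q : EuclideanSpace ℝ (Fin n) × EuclideanSpace ℝ (Fin m) =>
      g q.1 q.2) := by
    have heq : (fun q : EuclideanSpace ℝ (Fin n) × EuclideanSpace ℝ (Fin m) => g q.1 q.2)
        = fun q => f q.1 (α q.1) q.2 := by funext q; rw [hg]
    rw [heq]
    exact hf.comp (measurable_fst.prodMk ((hα.comp measurable_fst).prodMk measurable_snd))
  have hVg : Measurable (fun q : EuclideanSpace ℝ (Fin n) × EuclideanSpace ℝ (Fin m) =>
      V (g q.1 q.2)) := hV.comp hGm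
  -- measurability of X k
  have hXmeas : ∀ k, Measurable (X k) := by
    intro k
    induction k with
    | zero =>
      have : X 0 = fun _ => x := funext hX0
      rw [this]; exact measurable_const
    | succ k ih =>
      have : X (k + 1) = fun ω => g (X k ω) (ξ k ω) := funext (hXrec k)
      rw [this]; exact hGm.comp (ih.prodMk (hξmeas k))
  -- X k expressed through chainFun
  have hchain : ∀ k ω, X k ω = chainFun g x k (fun i : Fin k => ξ i ω) := by
    intro k
    induction k with
    | zero => intro ω; simpa [chainFun] using hX0 ω
    | succ k ih =>
      intro ω
      rw [hXrec k ω, ih ω]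
      show _ = g (chainFun g x k (Fin.init fun i : Fin (k + 1) => ξ i ω)) _
      have : (Fin.init fun i : Fin (k + 1) => ξ i ω) = fun i : Fin k => ξ i ω := by
        funext i; simp [Fin.init]
      rw [this]
      rfl
  -- independence of X k and ξ k
  have hIndXk : ∀ k, IndepFun (X k) (ξ k) P := by
    intro k
    have hIF := hindep.indepFun_finset (Finset.range k) {k}
      (Finset.disjoint_singleton_right.2 (by simp)) hξmeas
    set φ₁ : ({j : ℕ // j ∈ Finset.range k} → EuclideanSpace ℝ (Fin m)) →
        EuclideanSpace ℝ (Fin n) :=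
      fun v => chainFun g x k (fun i : Fin k => v ⟨(i : ℕ), Finset.mem_range.2 i.isLt⟩) with hφ₁
    have hφ₁m : Measurable φ₁ :=
      (chainFun_measurable hGm x k).comp (measurable_pi_lambda _ fun i => measurable_pi_apply _)
    set φ₂ : ({j : ℕ // j ∈ ({k} : Finset ℕ)} → EuclideanSpace ℝ (Fin m)) →
        EuclideanSpace ℝ (Fin m) :=
      fun v => v ⟨k, Finset.mem_singleton_self k⟩ with hφ₂
    have hφ₂m : Measurable φ₂ := measurable_pi_apply _
    have h2 := hIF.comp hφ₁m hφ₂m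
    have he1 : (φ₁ ∘ fun a (i : {j : ℕ // j ∈ Finset.range k}) => ξ i a) = X k := by
      funext ω; exact (hchain k ω).symm
    have he2 : (φ₂ ∘ fun a (i : {j : ℕ // j ∈ ({k} : Finset ℕ)}) => ξ i a) = ξ k := by
      funext ω; rfl
    rwa [he1, he2] at h2
  -- the noise law
  set μ : Measure (EuclideanSpace ℝ (Fin m)) := P.map (ξ 0) with hμ
  haveI : IsProbabilityMeasure μ := Measure.isProbabilityMeasure_map (hξmeas 0).aemeasurable
  set h : EuclideanSpace ℝ (Fin n) → ℝ := fun x' => ∫ ξ', V (g x' ξ') ∂μ with hh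
  have hhm : StronglyMeasurable h := hVg.stronglyMeasurable.integral_prod_right'
  have hh_eq : ∀ x', h x' = ∫ ω, V (g x' (ξ 0 ω)) ∂P := by
    intro x'
    exact integral_map (hξmeas 0).aemeasurable
      (hV.comp (hGm.comp (measurable_const.prodMk measurable_id))).aestronglyMeasurable
  have hintμ : ∀ x', Integrable (fun ξ' => V (g x' ξ')) μ := by
    intro x'
    have hm : Measurable fun ξ' : EuclideanSpace ℝ (Fin m) => V (g x' ξ') :=
      hVg.comp (measurable_const.prodMk measurable_id)
    rw [hμ, integrable_map_measure hm.aestronglyMeasurable (hξmeas 0).aemeasurable]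
    exact hint x'
  have hh_nonneg : ∀ x', 0 ≤ h x' := fun x' => integral_nonneg fun _ => hVnonneg _
  -- the drift/boundedness key estimate
  have hb_bound : ∀ x' ∈ C, (∫ ω, V (g x' (ξ 0 ω)) ∂P) ≤ b := by
    have hbdd : BddAbove (Set.range fun x' => ⨆ _ : x' ∈ C, ∫ ω, V (g x' (ξ 0 ω)) ∂P) := by
      by_contra hc
      rw [Real.iSup_of_not_bddAbove hc] at hsup
      exact hb.ne hsup
    intro x' hx'
    calc (∫ ω, V (g x' (ξ 0 ω)) ∂P)
        = ⨆ _ : x' ∈ C, ∫ ω, V (g x' (ξ 0 ω)) ∂P :=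
          (ciSup_pos (p := x' ∈ C) (f := fun _ => ∫ ω, V (g x' (ξ 0 ω)) ∂P) hx').symm
      _ ≤ ⨆ x', ⨆ _ : x' ∈ C, ∫ ω, V (g x' (ξ 0 ω)) ∂P := le_ciSup hbdd x'
      _ = b := hsup
  have hkey : ∀ x', h x' ≤ lam * V x' + b := by
    intro x'
    by_cases hx' : x' ∈ C
    · rw [hh_eq x']
      have := hb_bound x' hx'
      have hnn : 0 ≤ lam * V x' := mul_nonneg hlam0 (hVnonneg x')
      linarith
    · rw [hh_eq x']
      have h1 := hdrift x' hx'
      have h2 : lammin * V x' ≤ lam * V x' := mul_le_mul_of_nonneg_right hlam.1 (hVnonneg x')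
      linarith
  -- main induction : integrability and expectation bound
  have main : ∀ k, Integrable (fun ω => V (X k ω)) P ∧
      (∫ ω, V (X k ω) ∂P) ≤ lam ^ k * V x + b * ∑ i ∈ Finset.range k, lam ^ i := by
    intro k
    induction k with
    | zero =>
      constructor
      · have : (fun ω => V (X 0 ω)) = fun _ => V x := funext fun ω => by rw [hX0]
        rw [this]; exact integrable_const _
      · have : (fun ω => V (X 0 ω)) = fun _ => V x := funext fun ω => by rw [hX0]
        rw [this]; simp
    | succ k ih =>
      obtain ⟨ihint, ihle⟩ := ih
      set ν : Measure (EuclideanSpace ℝ (Fin n)) := P.map (X k) with hν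
      haveI : IsProbabilityMeasure ν := Measure.isProbabilityMeasure_map (hXmeas k).aemeasurable
      have hjoint : P.map (fun ω => (X k ω, ξ k ω)) = ν.prod μ := by
        rw [(indepFun_iff_map_prod_eq_prod_map_map (hXmeas k).aemeasurable
          (hξmeas k).aemeasurable).mp (hIndXk k), hident k]
      have hVν : Integrable V ν := by
        rw [hν, integrable_map_measure hV.aestronglyMeasurable (hXmeas k).aemeasurable]
        exact ihint
      have hhint : Integrable h ν := by
        refine Integrable.mono' ((hVν.const_mul lam).add (integrable_const b))
          hhm.aestronglyMeasurable ?_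
        filter_upwards with x'
        rw [Real.norm_of_nonneg (hh_nonneg x')]
        exact hkey x'
      have hprodint : Integrable (fun q : EuclideanSpace ℝ (Fin n) × EuclideanSpace ℝ (Fin m) =>
          V (g q.1 q.2)) (ν.prod μ) := by
        rw [integrable_prod_iff hVg.aestronglyMeasurable]
        constructor
        · exact ae_of_all _ fun x' => hintμ x'
        · have heqn : (fun x' => ∫ y, ‖V (g x' y)‖ ∂μ) = h := by
            funext x'
            exact integral_congr_ae (ae_of_all _ fun y => Real.norm_of_nonneg (hVnonneg _))
          rw [heqn]
          exact hhint
      have heq : (fun ω => V (X (k + 1) ω)) = fun ω => V (g (X k ω) (ξ k ω)) :=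
        funext fun ω => by rw [hXrec]
      have hint_next : Integrable (fun ω => V (X (k + 1) ω)) P := by
        rw [heq]
        rw [← hjoint] at hprodint
        have := (integrable_map_measure hVg.aestronglyMeasurable
          ((hXmeas k).prodMk (hξmeas k)).aemeasurable).mp hprodint
        exact this
      have hval : ∫ ω, V (X (k + 1) ω) ∂P = ∫ x', h x' ∂ν := by
        rw [heq]
        have h2 : ∫ ω, V (g (X k ω) (ξ k ω)) ∂P
            = ∫ q : EuclideanSpace ℝ (Fin n) × EuclideanSpace ℝ (Fin m),
              V (g q.1 q.2) ∂(ν.prod μ) := by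
          rw [← hjoint]
          exact (integral_map ((hXmeas k).prodMk (hξmeas k)).aemeasurable
            hVg.aestronglyMeasurable).symm
        rw [h2, integral_prod _ hprodint]
      have hle : ∫ x', h x' ∂ν ≤ lam * (∫ ω, V (X k ω) ∂P) + b := by
        calc ∫ x', h x' ∂ν ≤ ∫ x', (lam * V x' + b) ∂ν :=
              integral_mono hhint ((hVν.const_mul lam).add (integrable_const b)) hkey
          _ = lam * (∫ x', V x' ∂ν) + b := by
              rw [integral_add (hVν.const_mul lam) (integrable_const b), integral_const_mul]
              simp
          _ = lam * (∫ ω, V (X k ω) ∂P) + b := by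
              rw [hν, integral_map (hXmeas k).aemeasurable hV.aestronglyMeasurable]
      refine ⟨hint_next, ?_⟩
      rw [hval]
      have hstep : lam * (∫ ω, V (X k ω) ∂P) + b
          ≤ lam * (lam ^ k * V x + b * ∑ i ∈ Finset.range k, lam ^ i) + b := by
        have := mul_le_mul_of_nonneg_left ihle hlam0
        linarith
      refine le_trans hle (le_trans hstep (le_of_eq ?_))
      rw [geom_sum_succ]
      ring
  obtain ⟨hintk, hlek⟩ := main k
  -- geometric sum bound
  have hsum : ∑ i ∈ Finset.range k, lam ^ i ≤ (1 - lam)⁻¹ := by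
    have hne : lam ≠ 1 := ne_of_lt hlam1
    rw [geom_sum_eq hne]
    have h1 : (lam ^ k - 1) / (lam - 1) = (1 - lam ^ k) * (1 - lam)⁻¹ := by
      rw [← neg_div_neg_eq, neg_sub, neg_sub, div_eq_mul_inv]
    rw [h1]
    have hpk : 0 ≤ lam ^ k := pow_nonneg hlam0 k
    have : (1 - lam ^ k) ≤ 1 := by linarith
    calc (1 - lam ^ k) * (1 - lam)⁻¹ ≤ 1 * (1 - lam)⁻¹ :=
          mul_le_mul_of_nonneg_right this (inv_nonneg.2 (by linarith))
      _ = (1 - lam)⁻¹ := one_mul _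
  have hEVk : ∫ ω, V (X k ω) ∂P ≤ lam ^ k * V x + b * (1 - lam)⁻¹ :=
    le_trans hlek (by
      have := mul_le_mul_of_nonneg_left hsum hb.le
      linarith)
  -- Markov's inequality
  have hsub : {ω | r < ‖X k ω‖} ⊆ {ω | mr ≤ V (X k ω)} := by
    intro ω hω
    have hmem : V (X k ω) ∈ V '' {y | r < ‖y‖} := ⟨X k ω, hω, rfl⟩
    have hbdd : BddBelow (V '' {y | r < ‖y‖}) :=
      ⟨0, fun z hz => by obtain ⟨y, _, hy⟩ := hz; exact hy ▸ hVnonneg y⟩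
    show mr ≤ V (X k ω)
    rw [hmr]
    exact csInf_le hbdd hmem
  have markov := mul_meas_ge_le_integral_of_nonneg
    (ae_of_all P fun ω => hVnonneg (X k ω)) hintk mr
  rw [le_div_iff₀ hmrpos]
  calc (P {ω | r < ‖X k ω‖}).toReal * mr
      = mr * (P {ω | r < ‖X k ω‖}).toReal := mul_comm _ _
    _ ≤ mr * (P {ω | mr ≤ V (X k ω)}).toReal := by
        refine mul_le_mul_of_nonneg_left ?_ hmrpos.le
        exact ENNReal.toReal_mono (measure_ne_top P _) (measure_mono hsub)
    _ ≤ ∫ ω, V (X k ω) ∂P := markov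
    _ ≤ lam ^ k * V x + b * (1 - lam)⁻¹ := hEVk
end

section
/- Let X be the closed-loop chain X_0 = x, X_{k+1} = g(X_k, ξ_k). Suppose there exist b > 0, λ_min ∈ [0,1), a measurable V : ℝ^n → [0,∞), and a compact C ⊆ ℝ^n such that for every x ∉ C, E[V(g(x, ξ_0))] ≤ λ_min · V(x), sup_{x ∈ C} E[V(g(x, ξ_0))] = b, and ω ↦ V(g(x, ξ_0(ω))) is integrable for every x. Suppose moreover that V is norm-like: there is a function φ : [0,∞) → [0,∞) with φ(s) → ∞ as s → ∞ such that V(y) ≥ φ(‖y‖) for all y ∈ ℝ^n. Then the chain is bounded in probability: for every initial state x ∈ ℝ^n and every ε > 0 there exists r > 0 such that P(‖X_k‖ > r) ≤ ε for every k ∈ ℕ. -/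
open MeasureTheory ProbabilityTheory Filter

/-- Iteration of a two-argument map along a sequence of noises. -/
def driftIter {A B : Type*} (g : A → B → A) (x : A) : ℕ → (ℕ → B) → A
  | 0, _ => x
  | (k+1), s => g (driftIter g x k s) (s k)

lemma driftIter_measurable {A B : Type*} [MeasurableSpace A] [MeasurableSpace B]
    {g : A → B → A} (hg : Measurable fun q : A × B => g q.1 q.2) (x : A) (k : ℕ) :
    Measurable (driftIter g x k) := by
  induction k with
  | zero => exact measurable_const
  | succ k ih =>
      have : (driftIter g x (k+1)) =
          (fun q : A × B => g q.1 q.2) ∘ (fun s => (driftIter g x k s, s k)) := rfl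
      rw [this]
      exact hg.comp (ih.prodMk (measurable_pi_apply k))

lemma driftIter_congr {A B : Type*} {g : A → B → A} {x : A} (k : ℕ)
    {s s' : ℕ → B} (h : ∀ i < k, s i = s' i) :
    driftIter g x k s = driftIter g x k s' := by
  induction k with
  | zero => rfl
  | succ k ih =>
      have h1 : driftIter g x k s = driftIter g x k s' :=
        ih fun i hi => h i (Nat.lt_succ_of_lt hi)
      simp only [driftIter, h1, h k (Nat.lt_succ_self k)]

/-- Boundedness in probability: under the geometric drift condition with a
norm-like Lyapunov function `V` (i.e. `V y ≥ φ ‖y‖` with `φ s → ∞` as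
`s → ∞`), the closed-loop chain is bounded in probability, uniformly in time:
for every `ε > 0` there is `r > 0` with `P(‖X k‖ > r) ≤ ε` for all `k`. -/
theorem bounded_in_probability_from_drift
    {n p m : ℕ} {Ω : Type} [MeasurableSpace Ω] (P : Measure Ω) [IsProbabilityMeasure P]
    (ξ : ℕ → Ω → EuclideanSpace ℝ (Fin m)) (hξmeas : ∀ k, Measurable (ξ k))
    (hindep : iIndepFun ξ P)
    (hident : ∀ k, P.map (ξ k) = P.map (ξ 0))
    (f : EuclideanSpace ℝ (Fin n) → EuclideanSpace ℝ (Fin p) → EuclideanSpace ℝ (Fin m) →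
      EuclideanSpace ℝ (Fin n))
    (hf : Measurable fun q : EuclideanSpace ℝ (Fin n) × EuclideanSpace ℝ (Fin p) ×
      EuclideanSpace ℝ (Fin m) => f q.1 q.2.1 q.2.2)
    (α : EuclideanSpace ℝ (Fin n) → EuclideanSpace ℝ (Fin p)) (hα : Measurable α)
    (g : EuclideanSpace ℝ (Fin n) → EuclideanSpace ℝ (Fin m) → EuclideanSpace ℝ (Fin n))
    (hg : ∀ x' ξ', g x' ξ' = f x' (α x') ξ')
    (V : EuclideanSpace ℝ (Fin n) → ℝ) (hV : Measurable V) (hVnonneg : ∀ y, 0 ≤ V y)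
    (b : ℝ) (hb : 0 < b) (lammin : ℝ) (hlammin : lammin ∈ Set.Ico (0 : ℝ) 1)
    (C : Set (EuclideanSpace ℝ (Fin n))) (hC : IsCompact C)
    (hint : ∀ x', Integrable (fun ω => V (g x' (ξ 0 ω))) P)
    (hdrift : ∀ x' ∉ C, ∫ ω, V (g x' (ξ 0 ω)) ∂P ≤ lammin * V x')
    (hsup : (⨆ x' ∈ C, ∫ ω, V (g x' (ξ 0 ω)) ∂P) = b)
    (φ : ℝ → ℝ) (hφnonneg : ∀ s, 0 ≤ s → 0 ≤ φ s)
    (hφtendsto : Tendsto φ atTop atTop)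
    (hnormlike : ∀ y : EuclideanSpace ℝ (Fin n), φ ‖y‖ ≤ V y)
    (x : EuclideanSpace ℝ (Fin n)) (X : ℕ → Ω → EuclideanSpace ℝ (Fin n))
    (hX0 : ∀ ω, X 0 ω = x)
    (hXrec : ∀ k ω, X (k + 1) ω = g (X k ω) (ξ k ω))
    (ε : ℝ) (hε : 0 < ε) :
    ∃ r : ℝ, 0 < r ∧ ∀ k : ℕ, (P {ω | r < ‖X k ω‖}).toReal ≤ ε := by
  obtain ⟨hlam0, hlam1⟩ := hlammin
  -- measurability of g as a function of a pair
  have gmeas : Measurable fun q : EuclideanSpace ℝ (Fin n) × EuclideanSpace ℝ (Fin m) =>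
      g q.1 q.2 := by
    have : (fun q : EuclideanSpace ℝ (Fin n) × EuclideanSpace ℝ (Fin m) => g q.1 q.2) =
        (fun q : EuclideanSpace ℝ (Fin n) × EuclideanSpace ℝ (Fin p) ×
          EuclideanSpace ℝ (Fin m) => f q.1 q.2.1 q.2.2) ∘
        (fun q => (q.1, α q.1, q.2)) := by
      funext q; simp [hg]
    rw [this]
    exact hf.comp (measurable_fst.prodMk ((hα.comp measurable_fst).prodMk measurable_snd))
  -- X k is the deterministic iteration applied to the noise sequence
  have hXiter : ∀ k ω, X k ω = driftIter g x k (fun i => ξ i ω) := by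
    intro k
    induction k with
    | zero => intro ω; simp [driftIter, hX0 ω]
    | succ k ih => intro ω; simp [driftIter, hXrec k ω, ih ω]
  have Xmeas : ∀ k, Measurable (X k) := by
    intro k
    have : X k = fun ω => driftIter g x k (fun i => ξ i ω) := funext fun ω => hXiter k ω
    rw [this]
    exact (driftIter_measurable gmeas x k).comp (measurable_pi_lambda _ fun i => hξmeas i)
  -- independence of X k and ξ k
  have hXindep : ∀ k, IndepFun (X k) (ξ k) P := by
    intro k
    have hST : Disjoint (Finset.range k) ({k} : Finset ℕ) := by simp
    have hbase := hindep.indepFun_finset (Finset.range k) {k} hST hξmeas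
    set F : (↥(Finset.range k) → EuclideanSpace ℝ (Fin m)) →
        EuclideanSpace ℝ (Fin n) :=
      fun t => driftIter g x k
        (fun i => if h : i ∈ Finset.range k then t ⟨i, h⟩ else 0) with hF
    set G : (↥({k} : Finset ℕ) → EuclideanSpace ℝ (Fin m)) → EuclideanSpace ℝ (Fin m) :=
      fun t => t ⟨k, Finset.mem_singleton_self k⟩ with hG
    have hFmeas : Measurable F := by
      apply (driftIter_measurable gmeas x k).comp
      apply measurable_pi_lambda
      intro i
      by_cases h : i ∈ Finset.range k
      · simpa [h] using measurable_pi_apply (⟨i, h⟩ : ↥(Finset.range k))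
      · simpa [h] using measurable_const
    have hGmeas : Measurable G := measurable_pi_apply _
    have hcomp := hbase.comp hFmeas hGmeas
    have h1 : (F ∘ fun a (i : (Finset.range k : Finset ℕ)) => ξ i a) = X k := by
      funext a
      simp only [Function.comp, hF]
      rw [hXiter k a]
      apply driftIter_congr
      intro i hi
      simp [Finset.mem_range.mpr hi]
    have h2 : (G ∘ fun a (i : ({k} : Finset ℕ)) => ξ i a) = ξ k := rfl
    rwa [h1, h2] at hcomp
  -- the conditional-expectation function h
  set hfun : EuclideanSpace ℝ (Fin n) → ℝ := fun x' => ∫ ω, V (g x' (ξ 0 ω)) ∂P with hhfun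
  have hfun_nonneg : ∀ x', 0 ≤ hfun x' := fun x' =>
    integral_nonneg fun ω => hVnonneg _
  -- h is bounded by lammin * V + b everywhere
  have hfun_le : ∀ x', hfun x' ≤ lammin * V x' + b := by
    intro x'
    by_cases hx : x' ∈ C
    · -- on C: bounded by the sup b
      have hbdd : BddAbove (Set.range fun x'' => ⨆ _ : x'' ∈ C, hfun x'') := by
        by_contra hcon
        have := Real.iSup_of_not_bddAbove hcon
        rw [hsup] at this
        exact absurd this (ne_of_gt hb)
      have h1 : (⨆ _ : x' ∈ C, hfun x') ≤ b := by
        rw [← hsup]; exact le_ciSup hbdd x'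
      have h2 : (⨆ _ : x' ∈ C, hfun x') = hfun x' := ciSup_pos hx
      have : hfun x' ≤ b := h2 ▸ h1
      nlinarith [mul_nonneg hlam0 (hVnonneg x')]
    · have := hdrift x' hx
      nlinarith
  -- uniform bound on the moments of V along the chain
  set M0 : ℝ := max (V x) (b / (1 - lammin)) with hM0
  have hM0nonneg : 0 ≤ M0 := le_trans (hVnonneg x) (le_max_left _ _)
  have hM0key : lammin * M0 + b ≤ M0 := by
    have h1 : b / (1 - lammin) ≤ M0 := le_max_right _ _
    have h2 : (0:ℝ) < 1 - lammin := by linarith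
    rw [div_le_iff₀ h2] at h1
    nlinarith
  have hW : ∀ k, ∫⁻ ω, ENNReal.ofReal (V (X k ω)) ∂P ≤ ENNReal.ofReal M0 := by
    intro k
    induction k with
    | zero =>
        have : (fun ω => ENNReal.ofReal (V (X 0 ω))) =
            fun _ => ENNReal.ofReal (V x) := by funext ω; rw [hX0 ω]
        rw [this, lintegral_const, measure_univ, mul_one]
        exact ENNReal.ofReal_le_ofReal (le_max_left _ _)
    | succ k ih =>
        set μ : Measure (EuclideanSpace ℝ (Fin n)) := P.map (X k) with hμ
        set ν : Measure (EuclideanSpace ℝ (Fin m)) := P.map (ξ k) with hν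
        haveI : IsProbabilityMeasure μ := Measure.isProbabilityMeasure_map (Xmeas k).aemeasurable
        haveI : IsProbabilityMeasure ν := Measure.isProbabilityMeasure_map (hξmeas k).aemeasurable
        have hpairmeas : Measurable fun ω => (X k ω, ξ k ω) :=
          (Xmeas k).prodMk (hξmeas k)
        have hVg : Measurable fun q : EuclideanSpace ℝ (Fin n) × EuclideanSpace ℝ (Fin m) =>
            ENNReal.ofReal (V (g q.1 q.2)) :=
          ENNReal.measurable_ofReal.comp (hV.comp gmeas)
        have hjoint : P.map (fun ω => (X k ω, ξ k ω)) = μ.prod ν :=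
          (indepFun_iff_map_prod_eq_prod_map_map (Xmeas k).aemeasurable
            (hξmeas k).aemeasurable).mp (hXindep k)
        have step1 : ∫⁻ ω, ENNReal.ofReal (V (X (k+1) ω)) ∂P =
            ∫⁻ q, ENNReal.ofReal (V (g q.1 q.2)) ∂(μ.prod ν) := by
          have : (fun ω => ENNReal.ofReal (V (X (k+1) ω))) =
              (fun q : EuclideanSpace ℝ (Fin n) × EuclideanSpace ℝ (Fin m) =>
                ENNReal.ofReal (V (g q.1 q.2))) ∘ fun ω => (X k ω, ξ k ω) := by
            funext ω; simp [hXrec k ω]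
          rw [this, ← hjoint, lintegral_map hVg hpairmeas]
          rfl
        have step2 : ∫⁻ q, ENNReal.ofReal (V (g q.1 q.2)) ∂(μ.prod ν) =
            ∫⁻ x', ∫⁻ s, ENNReal.ofReal (V (g x' s)) ∂ν ∂μ :=
          lintegral_prod _ hVg.aemeasurable
        have inner_eq : ∀ x', ∫⁻ s, ENNReal.ofReal (V (g x' s)) ∂ν =
            ENNReal.ofReal (hfun x') := by
          intro x'
          have hm : Measurable fun s : EuclideanSpace ℝ (Fin m) =>
              ENNReal.ofReal (V (g x' s)) :=
            ENNReal.measurable_ofReal.comp (hV.comp (gmeas.comp measurable_prodMk_left))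
          rw [hν, hident k, lintegral_map hm (hξmeas 0)]
          exact (ofReal_integral_eq_lintegral_ofReal (hint x')
            (Filter.Eventually.of_forall fun ω => hVnonneg _)).symm
        have step3 : ∫⁻ x', ∫⁻ s, ENNReal.ofReal (V (g x' s)) ∂ν ∂μ ≤
            ∫⁻ x', ENNReal.ofReal (lammin * V x' + b) ∂μ := by
          apply lintegral_mono
          intro x'
          dsimp only
          rw [inner_eq x']
          exact ENNReal.ofReal_le_ofReal (hfun_le x')
        have step4 : ∫⁻ x', ENNReal.ofReal (lammin * V x' + b) ∂μ =
            ∫⁻ ω, ENNReal.ofReal (lammin * V (X k ω) + b) ∂P := by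
          have hm2 : Measurable fun x' : EuclideanSpace ℝ (Fin n) =>
              ENNReal.ofReal (lammin * V x' + b) :=
            ENNReal.measurable_ofReal.comp ((hV.const_mul lammin).add_const b)
          rw [hμ, lintegral_map hm2 (Xmeas k)]
        have step5 : ∫⁻ ω, ENNReal.ofReal (lammin * V (X k ω) + b) ∂P ≤
            ENNReal.ofReal M0 := by
          have heq : ∀ ω, ENNReal.ofReal (lammin * V (X k ω) + b) =
              ENNReal.ofReal lammin * ENNReal.ofReal (V (X k ω)) + ENNReal.ofReal b := by
            intro ω
            rw [ENNReal.ofReal_add (mul_nonneg hlam0 (hVnonneg _)) hb.le,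
              ENNReal.ofReal_mul hlam0]
          have hm3 : Measurable fun ω => ENNReal.ofReal (V (X k ω)) :=
            ENNReal.measurable_ofReal.comp (hV.comp (Xmeas k))
          simp_rw [heq]
          rw [lintegral_add_right _ measurable_const, lintegral_const, measure_univ, mul_one,
            lintegral_const_mul _ hm3]
          calc ENNReal.ofReal lammin * ∫⁻ ω, ENNReal.ofReal (V (X k ω)) ∂P +
                ENNReal.ofReal b
              ≤ ENNReal.ofReal lammin * ENNReal.ofReal M0 + ENNReal.ofReal b := by
                gcongr
            _ = ENNReal.ofReal (lammin * M0 + b) := by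
                rw [← ENNReal.ofReal_mul hlam0,
                  ← ENNReal.ofReal_add (mul_nonneg hlam0 hM0nonneg) hb.le]
            _ ≤ ENNReal.ofReal M0 := ENNReal.ofReal_le_ofReal hM0key
        calc ∫⁻ ω, ENNReal.ofReal (V (X (k+1) ω)) ∂P
            = ∫⁻ x', ∫⁻ s, ENNReal.ofReal (V (g x' s)) ∂ν ∂μ := by rw [step1, step2]
          _ ≤ ∫⁻ x', ENNReal.ofReal (lammin * V x' + b) ∂μ := step3
          _ = ∫⁻ ω, ENNReal.ofReal (lammin * V (X k ω) + b) ∂P := step4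
          _ ≤ ENNReal.ofReal M0 := step5
  -- choose the radius from the norm-like condition
  set K : ℝ := M0 / ε + 1 with hK
  have hKpos : 0 < K := by positivity
  obtain ⟨r0, hr0⟩ := (hφtendsto.eventually_ge_atTop K).exists_forall_of_atTop
  refine ⟨max r0 1, lt_of_lt_of_le one_pos (le_max_right _ _), ?_⟩
  intro k
  have hsub : {ω | max r0 1 < ‖X k ω‖} ⊆
      {ω | ENNReal.ofReal K ≤ ENNReal.ofReal (V (X k ω))} := by
    intro ω hω
    have h1 : r0 ≤ ‖X k ω‖ := le_of_lt (lt_of_le_of_lt (le_max_left _ _) hω)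
    have h2 : K ≤ V (X k ω) := le_trans (hr0 _ h1) (hnormlike _)
    exact ENNReal.ofReal_le_ofReal h2
  have hmarkov : ENNReal.ofReal K *
      P {ω | ENNReal.ofReal K ≤ ENNReal.ofReal (V (X k ω))} ≤
      ∫⁻ ω, ENNReal.ofReal (V (X k ω)) ∂P :=
    mul_meas_ge_le_lintegral₀ (ENNReal.measurable_ofReal.comp
      (hV.comp (Xmeas k))).aemeasurable _
  have hKne : ENNReal.ofReal K ≠ 0 := by
    simp [ENNReal.ofReal_eq_zero, not_le, hKpos]
  have hfinal : P {ω | max r0 1 < ‖X k ω‖} ≤ ENNReal.ofReal M0 / ENNReal.ofReal K := by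
    have h1 : P {ω | max r0 1 < ‖X k ω‖} ≤
        P {ω | ENNReal.ofReal K ≤ ENNReal.ofReal (V (X k ω))} := measure_mono hsub
    have h2 : P {ω | ENNReal.ofReal K ≤ ENNReal.ofReal (V (X k ω))} ≤
        ENNReal.ofReal M0 / ENNReal.ofReal K := by
      rw [ENNReal.le_div_iff_mul_le (Or.inl hKne) (Or.inl ENNReal.ofReal_ne_top)]
      rw [mul_comm]
      exact le_trans hmarkov (hW k)
    exact le_trans h1 h2
  have htoReal : (P {ω | max r0 1 < ‖X k ω‖}).toReal ≤ M0 / K := by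
    have hne : ENNReal.ofReal M0 / ENNReal.ofReal K ≠ ⊤ :=
      (ENNReal.div_lt_top ENNReal.ofReal_ne_top hKne).ne
    calc (P {ω | max r0 1 < ‖X k ω‖}).toReal
        ≤ (ENNReal.ofReal M0 / ENNReal.ofReal K).toReal := ENNReal.toReal_mono hne hfinal
      _ = M0 / K := by
          rw [ENNReal.toReal_div, ENNReal.toReal_ofReal hM0nonneg,
            ENNReal.toReal_ofReal hKpos.le]
  refine le_trans htoReal ?_
  rw [div_le_iff₀ hKpos, hK]
  have heps : ε * (M0 / ε + 1) = M0 + ε := by field_simp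
  rw [heps]; linarith
end
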